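/- For distinct i,j,k,l ∈ [4], any γ ∈ Γ_4^3, and the action defined above: o_{π_{(ij)}γ}({i,j,k}) = -o_γ({i,j,k}), o_{π_{(ij)}γ}({i,j,l}) = -o_γ({i,j,l}), o_{π_{(ij)}γ}({j,k,l}) = o_γ({j,k,l}), and o_{π_{(ij)}γ}({k,i,l}) = o_γ({k,i,l}); consequently G embeds as a subgroup of (Z/2)^4. -/

import Mathlib

open Equiv Equiv.Perm

/- We model `Γ₄³`, the cyclic orderings `(i j k)` of 3-element subsets of `[4]`, as the
3-cycles in the permutation group of `Fin 4`: `(i j k)` is the 3-cycle `i ↦ j ↦ k ↦ i`.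
Reversal `-(i j k) = (k j i)` corresponds to inversion. -/

/-- The 3-cycle `i ↦ j ↦ k ↦ i` (for distinct `i j k`). -/
def c3 (i j k : Fin 4) : Equiv.Perm (Fin 4) := Equiv.swap i j * Equiv.swap j k

/-- The fourth element of `Fin 4` besides the distinct elements `a b c`
(using `0+1+2+3 = 2` in `Fin 4`). -/
def fourth (a b c : Fin 4) : Fin 4 := 2 - a - b - c

/-- The map `π_{(ab)} : Γ₄³ → Γ₄³`, determined by `π_{(ij)}(ijk) = (jil)` and
`π_{(kl)}(ijk) = (ijl)` for `{i,j,k,l} = [4]`. If both `a,b` lie in the support of the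
3-cycle `γ`, reverse them and swap the third element for the fourth; otherwise exchange
the roles of `a` and `b` (conjugation by `swap a b`). -/
def piAct (a b : Fin 4) : Function.End (Equiv.Perm (Fin 4)) := fun γ =>
  if γ a ≠ a ∧ γ b ≠ b then
    (if γ a = b then c3 b a (fourth a b (γ b)) else c3 a b (fourth a b (γ a)))
  else Equiv.swap a b * γ * Equiv.swap a b

/-- `o_γ(S)`, for `S = {i,j,k}`: the cyclic orientation induced by `γ` on `{i,j,k}`;
it is `γ` itself if `{i,j,k}` is the support of `γ`, and otherwise is obtained from `γ` by
exchanging the element of the support outside `S` with the element of `S` outside the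
support (conjugation by the corresponding transposition). -/
def oFun (γ : Equiv.Perm (Fin 4)) (i j k : Fin 4) : Equiv.Perm (Fin 4) :=
  if γ i = i then Equiv.swap i (fourth i j k) * γ * Equiv.swap i (fourth i j k)
  else if γ j = j then Equiv.swap j (fourth i j k) * γ * Equiv.swap j (fourth i j k)
  else if γ k = k then Equiv.swap k (fourth i j k) * γ * Equiv.swap k (fourth i j k)
  else γ

/-- The generators `π_α` for all 2-element subsets `α ⊆ [4]`. -/
def piGens : Set (Function.End (Equiv.Perm (Fin 4))) :=
  {f | ∃ a b : Fin 4, a ≠ b ∧ f = piAct a b}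

/-! Each `π_{(ab)}` flips the orientations of exactly the two faces of the tetrahedron `[4]` that
contain `a` and `b`, whatever `γ` is. Recording the four orientations of `γ` as a vector in
`(ℤ/2)⁴`, every generator, hence every element of `G`, acts on `Γ₄³` as translation by a fixed
vector; this vector is additive in the group element, and it determines the action because a
3-cycle is determined by its four orientations. -/

section ShiftsBy

variable {X V : Type*} [AddCommGroup V] (S : Set X) (σ : X → V)

def ShiftsBy (g : Function.End X) (v : V) : Prop :=
  ∀ x ∈ S, g x ∈ S ∧ σ (g x) = σ x + v

variable {S σ}

theorem shiftsBy_one : ShiftsBy S σ 1 0 :=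
  fun _ hx => ⟨hx, (add_zero _).symm⟩

theorem ShiftsBy.mul {g h : Function.End X} {v w : V} (hg : ShiftsBy S σ g v)
    (hh : ShiftsBy S σ h w) : ShiftsBy S σ (g * h) (v + w) := by
  intro x hx
  obtain ⟨hhx, hσh⟩ := hh x hx
  obtain ⟨hghx, hσg⟩ := hg (h x) hhx
  refine ⟨hghx, ?_⟩
  change σ (g (h x)) = _
  rw [hσg, hσh, add_assoc, add_comm w]

theorem ShiftsBy.eq_sub {g : Function.End X} {v : V} (hg : ShiftsBy S σ g v) {x : X}
    (hx : x ∈ S) : v = σ (g x) - σ x := by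
  rw [(hg x hx).2, add_sub_cancel_left]

theorem exists_shiftsBy_of_mem_closure {T : Set (Function.End X)}
    (hT : ∀ g ∈ T, ∃ v, ShiftsBy S σ g v) {g : Function.End X}
    (hg : g ∈ Submonoid.closure T) : ∃ v, ShiftsBy S σ g v := by
  induction hg using Submonoid.closure_induction with
  | mem g hg => exact hT g hg
  | one => exact ⟨0, shiftsBy_one⟩
  | mul g h _ _ hg hh =>
    obtain ⟨v, hv⟩ := hg
    obtain ⟨w, hw⟩ := hh
    exact ⟨v + w, hv.mul hw⟩

theorem exists_additive_faithful_of_shiftsBy {T : Set (Function.End X)}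
    (hT : ∀ g ∈ T, ∃ v, ShiftsBy S σ g v) (hσ : S.InjOn σ) {x₀ : X} (hx₀ : x₀ ∈ S) :
    ∃ f : Function.End X → V,
      (∀ g ∈ Submonoid.closure T, ∀ h ∈ Submonoid.closure T, f (g * h) = f g + f h) ∧
      (∀ g ∈ Submonoid.closure T, ∀ h ∈ Submonoid.closure T,
        f g = f h → ∀ x ∈ S, g x = h x) := by
  refine ⟨fun g => σ (g x₀) - σ x₀, fun g hg h hh => ?_, fun g hg h hh hfgh x hx => ?_⟩
  · obtain ⟨v, hv⟩ := exists_shiftsBy_of_mem_closure hT hg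
    obtain ⟨w, hw⟩ := exists_shiftsBy_of_mem_closure hT hh
    dsimp only
    rw [← hv.eq_sub hx₀, ← hw.eq_sub hx₀, ← (hv.mul hw).eq_sub hx₀]
  · obtain ⟨v, hv⟩ := exists_shiftsBy_of_mem_closure hT hg
    obtain ⟨w, hw⟩ := exists_shiftsBy_of_mem_closure hT hh
    have hvw : v = w := (hv.eq_sub hx₀).trans (hfgh.trans (hw.eq_sub hx₀).symm)
    obtain ⟨hgx, hσg⟩ := hv x hx
    obtain ⟨hhx, hσh⟩ := hw x hx
    exact hσ hgx hhx (by rw [hσg, hσh, hvw])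

end ShiftsBy

/-- The orientations of `γ` on the four faces, the face `{m+1, m+2, m+3}` being indexed by the
omitted vertex `m`; the entry is `0` exactly when the orientation is `(m+1 m+2 m+3)`. -/
def orientVec (γ : Perm (Fin 4)) : Fin 4 → ZMod 2 := fun m =>
  if oFun γ (m + 1) (m + 2) (m + 3) = c3 (m + 1) (m + 2) (m + 3) then 0 else 1

def facesThrough (a b : Fin 4) : Fin 4 → ZMod 2 := fun m => if m = a ∨ m = b then 0 else 1

theorem isThreeCycle_c3_zero_one_two : (c3 0 1 2).IsThreeCycle := by
  rw [← card_support_eq_three_iff]; decide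

theorem isThreeCycle_piAct {a b : Fin 4} (hab : a ≠ b) {γ : Perm (Fin 4)}
    (hγ : γ.IsThreeCycle) : (piAct a b γ).IsThreeCycle := by
  rw [← card_support_eq_three_iff] at hγ ⊢
  revert a b γ; decide

theorem orientVec_piAct {a b : Fin 4} (hab : a ≠ b) {γ : Perm (Fin 4)} (hγ : γ.IsThreeCycle) :
    orientVec (piAct a b γ) = orientVec γ + facesThrough a b := by
  rw [← card_support_eq_three_iff] at hγ
  revert a b γ; decide

theorem shiftsBy_piAct {a b : Fin 4} (hab : a ≠ b) :
    ShiftsBy {γ | γ.IsThreeCycle} orientVec (piAct a b) (facesThrough a b) :=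
  fun _ hγ => ⟨isThreeCycle_piAct hab hγ, orientVec_piAct hab hγ⟩

theorem orientVec_injOn : {γ : Perm (Fin 4) | γ.IsThreeCycle}.InjOn orientVec := by
  intro γ hγ δ hδ
  rw [Set.mem_ofPred_eq, ← card_support_eq_three_iff] at hγ hδ
  revert γ δ; decide

set_option synthInstance.maxSize 1000 in
theorem oFun_piAct {i j k l : Fin 4} (hij : i ≠ j) (hik : i ≠ k) (hil : i ≠ l) (hjk : j ≠ k)
    (hjl : j ≠ l) (hkl : k ≠ l) {γ : Perm (Fin 4)} (hγ : γ.IsThreeCycle) :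
    oFun (piAct i j γ) i j k = (oFun γ i j k)⁻¹ ∧
      oFun (piAct i j γ) i j l = (oFun γ i j l)⁻¹ ∧
      oFun (piAct i j γ) j k l = oFun γ j k l ∧
      oFun (piAct i j γ) k i l = oFun γ k i l := by
  rw [← card_support_eq_three_iff] at hγ
  revert i j k l γ; decide

/-- The effect of `π_{(ij)}` on the orientation data `o_γ`: it reverses the orientations of
`{i,j,k}` and `{i,j,l}` and fixes those of `{j,k,l}` and `{k,i,l}`; consequently the group
`G` generated by the `π_α` embeds in `(ℤ/2)⁴` (elements of `G` with equal images act
identically on `Γ₄³`). -/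
theorem piAct_effect_on_o (i j k l : Fin 4)
    (hij : i ≠ j) (hik : i ≠ k) (hil : i ≠ l) (hjk : j ≠ k) (hjl : j ≠ l) (hkl : k ≠ l) :
    (∀ γ : Equiv.Perm (Fin 4), γ.IsThreeCycle →
      oFun (piAct i j γ) i j k = (oFun γ i j k)⁻¹ ∧
      oFun (piAct i j γ) i j l = (oFun γ i j l)⁻¹ ∧
      oFun (piAct i j γ) j k l = oFun γ j k l ∧
      oFun (piAct i j γ) k i l = oFun γ k i l) ∧
    ∃ f : Function.End (Equiv.Perm (Fin 4)) → (Fin 4 → ZMod 2),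
      (∀ g ∈ Submonoid.closure piGens, ∀ h ∈ Submonoid.closure piGens,
        f (g * h) = f g + f h) ∧
      (∀ g ∈ Submonoid.closure piGens, ∀ h ∈ Submonoid.closure piGens,
        f g = f h → ∀ γ : Equiv.Perm (Fin 4), γ.IsThreeCycle → g γ = h γ) := by
  refine ⟨fun γ hγ => oFun_piAct hij hik hil hjk hjl hkl hγ, ?_⟩
  have hgens : ∀ g ∈ piGens, ∃ v, ShiftsBy {γ | γ.IsThreeCycle} orientVec g v := by
    rintro _ ⟨a, b, hab, rfl⟩
    exact ⟨facesThrough a b, shiftsBy_piAct hab⟩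
  exact exists_additive_faithful_of_shiftsBy hgens orientVec_injOn isThreeCycle_c3_zero_one_two
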